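/- arXiv:2107.07080 — 3 statements merged into one kernel-verified Lean document; each statement's English description precedes it below -/
import Mathlib

section
/- Suppose b : U × V → ℝ is a continuous bilinear form on Hilbert spaces satisfying the inf-sup condition inf_{u≠0} sup_{v≠0} |b(u,v)|/(‖u‖_U ‖v‖_V) ≥ α > 0 and the definiteness condition (b(u,v) = 0 for all u implies v = 0). Then for every continuous linear functional l on V there exists a unique u ∈ U with b(u,v) = l(v) for all v ∈ V, and ‖u‖_U ≤ (1/α) ‖l‖_{V*}. -/
/-!
Represent each `b u` by Riesz: this gives a bounded operator `B : U → V` with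
`⟪B u, v⟫ = b u v` and `‖B u‖ = ‖b u‖`. The inf-sup condition says `α ‖u‖ ≤ ‖B u‖`, so `B` is
injective with closed range, and definiteness says that this range has trivial orthogonal
complement, so `B` is onto. The variational problem is `B u = l♯` with `l♯` the Riesz representer
of `l`, and `α ‖u‖ ≤ ‖B u‖ = ‖l‖` is the stability bound.
-/

open RealInnerProductSpace

theorem ContinuousLinearMap.iSup_abs_div_norm_le_opNorm {E : Type*} [NormedAddCommGroup E]
    [NormedSpace ℝ E] (f : StrongDual ℝ E) :
    ⨆ v : {v : E // v ≠ 0}, |f v.1| / ‖v.1‖ ≤ ‖f‖ :=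
  Real.iSup_le (fun v => div_le_of_le_mul₀ (norm_nonneg _) (norm_nonneg f) (f.le_opNorm v.1))
    (norm_nonneg f)

theorem AntilipschitzWith.surjective_of_orthogonal_range_eq_bot {𝕜 E F : Type*} [RCLike 𝕜]
    [NormedAddCommGroup E] [NormedSpace 𝕜 E] [CompleteSpace E]
    [NormedAddCommGroup F] [InnerProductSpace 𝕜 F] [CompleteSpace F]
    {T : E →L[𝕜] F} {K : NNReal} (hT : AntilipschitzWith K T)
    (hrange : T.rangeᗮ = ⊥) : Function.Surjective T := by
  have hclosed : IsClosed (T.range : Set F) := hT.isClosed_range T.uniformContinuous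
  refine LinearMap.range_eq_top.1 ?_
  rw [← hclosed.submodule_topologicalClosure_eq]
  exact Submodule.topologicalClosure_eq_top_iff.2 hrange

section Riesz

variable {U V : Type*} [NormedAddCommGroup U] [NormedSpace ℝ U]
  [NormedAddCommGroup V] [InnerProductSpace ℝ V] [CompleteSpace V]

noncomputable def rieszOperator (b : U →L[ℝ] V →L[ℝ] ℝ) : U →L[ℝ] V :=
  (InnerProductSpace.toDual ℝ V).symm.toContinuousLinearEquiv.toContinuousLinearMap.comp b

theorem rieszOperator_apply (b : U →L[ℝ] V →L[ℝ] ℝ) (u : U) :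
    rieszOperator b u = (InnerProductSpace.toDual ℝ V).symm (b u) := rfl

theorem inner_rieszOperator_apply (b : U →L[ℝ] V →L[ℝ] ℝ) (u : U) (v : V) :
    ⟪rieszOperator b u, v⟫ = b u v :=
  InnerProductSpace.toDual_symm_apply

theorem norm_rieszOperator_apply (b : U →L[ℝ] V →L[ℝ] ℝ) (u : U) :
    ‖rieszOperator b u‖ = ‖b u‖ :=
  (InnerProductSpace.toDual ℝ V).symm.norm_map (b u)

theorem rieszOperator_apply_eq_toDual_symm_iff (b : U →L[ℝ] V →L[ℝ] ℝ) (u : U)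
    (l : StrongDual ℝ V) :
    rieszOperator b u = (InnerProductSpace.toDual ℝ V).symm l ↔ ∀ v, b u v = l v := by
  rw [rieszOperator_apply, (InnerProductSpace.toDual ℝ V).symm.injective.eq_iff,
    ContinuousLinearMap.ext_iff]

theorem orthogonal_range_rieszOperator_eq_bot {b : U →L[ℝ] V →L[ℝ] ℝ}
    (hdef : ∀ v : V, (∀ u : U, b u v = 0) → v = 0) :
    (rieszOperator b).rangeᗮ = ⊥ := by
  refine (Submodule.eq_bot_iff _).2 fun v hv => hdef v fun u => ?_
  rw [← inner_rieszOperator_apply]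
  exact hv _ (LinearMap.mem_range_self _ u)

end Riesz

/-- Banach–Nečas–Babuška: a continuous bilinear form on Hilbert spaces
satisfying the inf-sup condition with constant `α > 0` and definiteness yields, for
each continuous linear functional `l` on `V`, a unique `u` with `b(u,·) = l` and
`‖u‖ ≤ (1/α) ‖l‖`. -/
theorem stmt1
    {U V : Type*} [NormedAddCommGroup U] [InnerProductSpace ℝ U] [CompleteSpace U]
    [NormedAddCommGroup V] [InnerProductSpace ℝ V] [CompleteSpace V]
    (b : U →L[ℝ] V →L[ℝ] ℝ) (α : ℝ) (hα : 0 < α)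
    (hinfsup : ∀ u : U, α * ‖u‖ ≤ ⨆ v : {v : V // v ≠ 0}, |b u v.1| / ‖v.1‖)
    (hdef : ∀ v : V, (∀ u : U, b u v = 0) → v = 0)
    (l : V →L[ℝ] ℝ) :
    ∃ u : U, (∀ v : V, b u v = l v) ∧ ‖u‖ ≤ (1 / α) * ‖l‖ ∧
      ∀ u' : U, (∀ v : V, b u' v = l v) → u' = u := by
  set B := rieszOperator b
  have hbelow (u : U) : α * ‖u‖ ≤ ‖B u‖ := by
    rw [norm_rieszOperator_apply]
    exact (hinfsup u).trans (b u).iSup_abs_div_norm_le_opNorm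
  obtain ⟨K, hK⟩ : ∃ K, AntilipschitzWith K B :=
    antilipschitzWith_iff_exists_mul_le_norm.2 ⟨α, hα, hbelow⟩
  obtain ⟨u, hu⟩ := hK.surjective_of_orthogonal_range_eq_bot
    (orthogonal_range_rieszOperator_eq_bot hdef) ((InnerProductSpace.toDual ℝ V).symm l)
  refine ⟨u, (rieszOperator_apply_eq_toDual_symm_iff b u l).1 hu, ?_, fun u' hu' => ?_⟩
  · rw [one_div, ← div_eq_inv_mul, le_div_iff₀' hα]
    simpa only [hu, LinearIsometryEquiv.norm_map] using hbelow u
  · exact hK.injective (((rieszOperator_apply_eq_toDual_symm_iff b u' l).2 hu').trans hu.symm)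
end

section
/- Suppose the convection kernel satisfies γ^conv(|s|) = (|s|/η) γ^diff(|s|) and ∫_{B_1(0)} γ^conv(|s|)|s| ds = d/η < ∞. Then for every u, v ∈ S_δ(Ω) and b ∈ L^∞, one has |(b · G_δ u, v)| ≤ C ‖b‖_{L^∞} ‖u‖_{S_δ(Ω)} ‖v‖_{L²(Ω)}, where C depends only on the moment bound. Consequently the optimal test quantity sup_{u ∈ S_δ(Ω), u ≠ 0} |b(u,v)|/‖u‖_{S_δ(Ω)} is finite for every v ∈ S_δ(Ω), where b(u,v) = ε a(u,v) + (b·G_δ u, v). -/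
/-!
Because `γᶜᵒⁿᵛ(r) = (r/η) γᵈⁱᶠᶠ(r)`, Young's inequality splits the convection integrand
pointwise: `2 γᶜᵒⁿᵛ(r) |u y - u x| |v x| ≤ t (v x)² γᶜᵒⁿᵛ(r) r + γᵈⁱᶠᶠ(r) (u y - u x)² / (η t)`
with `r = |y - x|`. After integration the first term is controlled by the first moment of
`γᶜᵒⁿᵛ` (translation moves every ball `B_δ(x)` to `B_δ(0)`) and the second by the nonlocal
energy of `u` (Tonelli), so `2 |(b·G_δ u, v)| ≤ ‖b‖_∞ (t (d/η) ‖v‖² + |u|²_{S_δ} / (η t))` for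
every `t > 0`, and optimizing in `t` gives the constant `√d / η`. The estimates are carried out
with lower Lebesgue integrals, so no measurability of `γᶜᵒⁿᵛ` is needed. The same
Young-and-optimize argument is Cauchy–Schwarz for `a`, which bounds the remaining part of
`b(u, v)`.
-/

open MeasureTheory Metric Filter Topology
open scoped RealInnerProductSpace ENNReal

variable {d : ℕ}

/-- Membership in the nonlocal energy space `S_δ(Ω)`: vanishing on the interaction
layer, square integrable on `Ω_δ`, with finite nonlocal Dirichlet energy. -/
def MemEnergy (Ω Ωδ : Set (EuclideanSpace ℝ (Fin d))) (γdiff : ℝ → ℝ)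
    (u : EuclideanSpace ℝ (Fin d) → ℝ) : Prop :=
  Measurable u ∧ (∀ x ∈ Ωδ \ Ω, u x = 0) ∧
    MeasureTheory.IntegrableOn (fun x => u x ^ 2) Ωδ ∧
    MeasureTheory.IntegrableOn
      (fun p : EuclideanSpace ℝ (Fin d) × EuclideanSpace ℝ (Fin d) =>
        γdiff (dist p.1 p.2) * (u p.2 - u p.1) ^ 2) (Ωδ ×ˢ Ωδ)

/-- The nonlocal energy (semi-)norm `|u|_{S_δ(Ω)}`. -/
noncomputable def energyNorm (Ωδ : Set (EuclideanSpace ℝ (Fin d))) (γdiff : ℝ → ℝ)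
    (u : EuclideanSpace ℝ (Fin d) → ℝ) : ℝ :=
  Real.sqrt (∫ p in Ωδ ×ˢ Ωδ, γdiff (dist p.1 p.2) * (u p.2 - u p.1) ^ 2)

/-- The convection pairing `(b · G_δ u, v)_{L²(Ω)}`. -/
noncomputable def convPairing (Ω : Set (EuclideanSpace ℝ (Fin d)))
    (H : EuclideanSpace ℝ (Fin d) → Set (EuclideanSpace ℝ (Fin d)))
    (bvec : EuclideanSpace ℝ (Fin d) → EuclideanSpace ℝ (Fin d)) (γconv : ℝ → ℝ)
    (u v : EuclideanSpace ℝ (Fin d) → ℝ) : ℝ :=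
  ∫ x in Ω, (∫ y in H x, (⟪bvec x, y - x⟫ / ‖y - x‖) * γconv (dist y x) * (u y - u x)) * v x

/-- The nonlocal Dirichlet form `a(u,v)`. -/
noncomputable def dirichletForm (Ωδ : Set (EuclideanSpace ℝ (Fin d))) (γdiff : ℝ → ℝ)
    (u v : EuclideanSpace ℝ (Fin d) → ℝ) : ℝ :=
  ∫ p in Ωδ ×ˢ Ωδ, γdiff (dist p.1 p.2) * (u p.2 - u p.1) * (v p.2 - v p.1)

theorem le_sqrt_mul_sqrt_of_forall_le {a b c : ℝ} (ha : 0 ≤ a) (hb : 0 ≤ b)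
    (h : ∀ t > 0, c ≤ (t * a + b / t) / 2) : c ≤ √a * √b := by
  have hε : ∀ ε > 0, c ≤ √(a + ε) * √(b + ε) := by
    intro ε hε
    have hs : 0 < √(a + ε) := Real.sqrt_pos.2 (by linarith)
    have hr : 0 < √(b + ε) := Real.sqrt_pos.2 (by linarith)
    calc c ≤ (√(b + ε) / √(a + ε) * a + b / (√(b + ε) / √(a + ε))) / 2 := h _ (by positivity)
      _ ≤ (√(b + ε) / √(a + ε) * √(a + ε) ^ 2 + √(b + ε) ^ 2 / (√(b + ε) / √(a + ε))) / 2 := by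
        rw [Real.sq_sqrt (by linarith), Real.sq_sqrt (by linarith)]
        gcongr <;> linarith
      _ = √(a + ε) * √(b + ε) := by field_simp; ring
  have hlim : Tendsto (fun ε => √(a + ε) * √(b + ε)) (𝓝[>] 0) (𝓝 (√a * √b)) := by
    have : Continuous (fun ε => √(a + ε) * √(b + ε)) := by fun_prop
    simpa using (this.tendsto 0).mono_left nhdsWithin_le_nhds
  exact ge_of_tendsto hlim (eventually_nhdsWithin_of_forall hε)

theorem two_mul_abs_mul_mul_le {t g a b : ℝ} (ht : 0 < t) (hg : 0 ≤ g) :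
    2 * |g * a * b| ≤ t * (g * a ^ 2) + g * b ^ 2 / t := by
  have key : 0 ≤ g / t * (t * |a| - |b|) ^ 2 := by positivity
  have h : t * (g * a ^ 2) + g * b ^ 2 / t - 2 * |g * a * b| = g / t * (t * |a| - |b|) ^ 2 := by
    rw [abs_mul, abs_mul, abs_of_nonneg hg, ← sq_abs a, ← sq_abs b]; field_simp; ring
  linarith

theorem abs_inner_div_norm_le {E : Type*} [NormedAddCommGroup E] [InnerProductSpace ℝ E] (b z : E) :
    |⟪b, z⟫ / ‖z‖| ≤ ‖b‖ := by
  rw [abs_div, abs_norm]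
  exact div_le_of_le_mul₀ (norm_nonneg _) (norm_nonneg _) (abs_real_inner_le_norm b z)

theorem setLIntegral_ball_dist {E : Type*} [NormedAddCommGroup E] [MeasurableSpace E]
    [MeasurableAdd E] (μ : Measure E) [μ.IsAddLeftInvariant] (f : ℝ → ℝ≥0∞) (x : E) (δ : ℝ) :
    ∫⁻ y in ball x δ, f (dist y x) ∂μ = ∫⁻ s in ball 0 δ, f ‖s‖ ∂μ := by
  have h := (measurePreserving_add_left μ x).setLIntegral_comp_preimage_emb
    (measurableEmbedding_addLeft x) (fun y => f (dist y x)) (ball x δ)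
  simpa [preimage_add_ball, dist_add_self_left] using h.symm

noncomputable def localEnergy {X : Type*} [PseudoMetricSpace X] [MeasureSpace X] (Ωδ : Set X)
    (γdiff : ℝ → ℝ) (u : X → ℝ) (x : X) : ℝ≥0∞ :=
  ∫⁻ y in Ωδ, ENNReal.ofReal (γdiff (dist x y) * (u y - u x) ^ 2)

section InnerProductSpace

variable {E : Type*} [NormedAddCommGroup E] [InnerProductSpace ℝ E]

variable {η t Bb : ℝ} {γdiff γconv : ℝ → ℝ}

theorem two_mul_abs_convIntegrand_le (hη : 0 < η) (ht : 0 < t) (hγd : ∀ r, 0 ≤ γdiff r)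
    (hrel : ∀ r, γconv r = r / η * γdiff r) {b : E} (hb : ‖b‖ ≤ Bb) (x y : E) (Δ w : ℝ) :
    2 * |⟪b, y - x⟫ / ‖y - x‖ * γconv (dist y x) * Δ * w| ≤
      Bb * (t * w ^ 2 * (γconv (dist y x) * dist y x) + γdiff (dist x y) * Δ ^ 2 / (η * t)) := by
  have hg : 0 ≤ γdiff (dist x y) / η := div_nonneg (hγd _) hη.le
  rw [hrel, dist_comm y x]
  calc 2 * |⟪b, y - x⟫ / ‖y - x‖ * (dist x y / η * γdiff (dist x y)) * Δ * w|
      = |⟪b, y - x⟫ / ‖y - x‖| * (2 * |γdiff (dist x y) / η * (dist x y * w) * Δ|) := by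
        rw [mul_left_comm _ (2 : ℝ), ← abs_mul]
        congr 2
        ring
    _ ≤ Bb * (t * (γdiff (dist x y) / η * (dist x y * w) ^ 2) +
          γdiff (dist x y) / η * Δ ^ 2 / t) :=
        mul_le_mul ((abs_inner_div_norm_le _ _).trans hb) (two_mul_abs_mul_mul_le ht hg)
          (by positivity) ((norm_nonneg _).trans hb)
    _ = _ := by field_simp

theorem two_mul_enorm_convIntegral_mul_le [MeasureSpace E] (hη : 0 < η) (ht : 0 < t)
    (hγd : ∀ r, 0 ≤ γdiff r) (hrel : ∀ r, γconv r = r / η * γdiff r) {b : E} (hb : ‖b‖ ≤ Bb)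
    {δ M : ℝ} {Hx Ωδ : Set E} {x : E} (hHball : Hx ⊆ ball x δ) (hHΩδ : Hx ⊆ Ωδ)
    (hM : ∫⁻ y in ball x δ, ENNReal.ofReal (γconv (dist y x) * dist y x) ≤ ENNReal.ofReal M)
    {u : E → ℝ} (hu : AEMeasurable (fun y => ENNReal.ofReal (γdiff (dist x y) * (u y - u x) ^ 2))
      (volume.restrict Ωδ)) (w : ℝ) :
    2 * ‖(∫ y in Hx, ⟪b, y - x⟫ / ‖y - x‖ * γconv (dist y x) * (u y - u x)) * w‖ₑ ≤
      ENNReal.ofReal Bb * (ENNReal.ofReal (t * w ^ 2) * ENNReal.ofReal M +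
        localEnergy Ωδ γdiff u x * ENNReal.ofReal (1 / (η * t))) := by
  have hBb : 0 ≤ Bb := (norm_nonneg _).trans hb
  have htw : 0 ≤ t * w ^ 2 := by positivity
  have hpt : ∀ y, 2 * ‖⟪b, y - x⟫ / ‖y - x‖ * γconv (dist y x) * (u y - u x) * w‖ₑ ≤
      ENNReal.ofReal Bb * (ENNReal.ofReal (t * w ^ 2) *
        ENNReal.ofReal (γconv (dist y x) * dist y x) +
        ENNReal.ofReal (γdiff (dist x y) * (u y - u x) ^ 2) * ENNReal.ofReal (1 / (η * t))) := by
    intro y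
    have hg := hγd (dist x y)
    have hc : 0 ≤ γconv (dist y x) * dist y x := by
      rw [hrel, dist_comm y]; positivity
    have h := ENNReal.ofReal_le_ofReal
      (two_mul_abs_convIntegrand_le hη ht hγd hrel hb x y (u y - u x) w)
    rwa [ENNReal.ofReal_mul zero_le_two, ENNReal.ofReal_ofNat, ← Real.enorm_eq_ofReal_abs,
      ENNReal.ofReal_mul hBb, div_eq_mul_one_div (γdiff (dist x y) * _),
      ENNReal.ofReal_add (mul_nonneg htw hc) (by positivity),
      ENNReal.ofReal_mul htw, ENNReal.ofReal_mul (mul_nonneg hg (sq_nonneg _))] at h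
  calc 2 * ‖(∫ y in Hx, ⟪b, y - x⟫ / ‖y - x‖ * γconv (dist y x) * (u y - u x)) * w‖ₑ
      ≤ ∫⁻ y in Hx, 2 * ‖⟪b, y - x⟫ / ‖y - x‖ * γconv (dist y x) * (u y - u x) * w‖ₑ := by
        rw [← integral_mul_const, lintegral_const_mul' _ _ ENNReal.ofNat_ne_top]
        gcongr
        exact enorm_integral_le_lintegral_enorm _
    _ ≤ ∫⁻ y in Hx, ENNReal.ofReal Bb * (ENNReal.ofReal (t * w ^ 2) *
          ENNReal.ofReal (γconv (dist y x) * dist y x) +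
          ENNReal.ofReal (γdiff (dist x y) * (u y - u x) ^ 2) * ENNReal.ofReal (1 / (η * t))) :=
        lintegral_mono hpt
    _ = ENNReal.ofReal Bb * (ENNReal.ofReal (t * w ^ 2) *
          (∫⁻ y in Hx, ENNReal.ofReal (γconv (dist y x) * dist y x)) +
          (∫⁻ y in Hx, ENNReal.ofReal (γdiff (dist x y) * (u y - u x) ^ 2)) *
            ENNReal.ofReal (1 / (η * t))) := by
        rw [lintegral_const_mul' _ _ ENNReal.ofReal_ne_top,
          lintegral_add_right' _
            ((hu.mono_measure (Measure.restrict_mono hHΩδ le_rfl)).mul_const _),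
          lintegral_const_mul' _ _ ENNReal.ofReal_ne_top,
          lintegral_mul_const' _ _ ENNReal.ofReal_ne_top]
    _ ≤ _ := by
        gcongr
        · exact (lintegral_mono_set hHball).trans hM
        · exact lintegral_mono_set hHΩδ

end InnerProductSpace

theorem setLIntegral_ball_moment_eq {δ η : ℝ} {γdiff γconv : ℝ → ℝ} (hη : 0 < η)
    (hγd : ∀ r, 0 ≤ γdiff r) (hrel : ∀ r, γconv r = r / η * γdiff r)
    (hmom : ∫ s in ball (0 : EuclideanSpace ℝ (Fin d)) δ, γconv ‖s‖ * ‖s‖ = d / η)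
    (x : EuclideanSpace ℝ (Fin d)) :
    ∫⁻ y in ball x δ, ENNReal.ofReal (γconv (dist y x) * dist y x) = ENNReal.ofReal (d / η) := by
  -- The moment identity forces integrability unless `d = 0`, where the space is a point.
  have hint : IntegrableOn (fun s : EuclideanSpace ℝ (Fin d) => γconv ‖s‖ * ‖s‖) (ball 0 δ) := by
    by_contra hnot
    rw [integral_undef hnot, eq_comm, div_eq_zero_iff] at hmom
    obtain rfl : d = 0 := by exact_mod_cast hmom.resolve_right hη.ne'
    exact hnot (by simp [Subsingleton.elim _ (0 : EuclideanSpace ℝ (Fin 0))])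
  rw [setLIntegral_ball_dist volume (fun r => ENNReal.ofReal (γconv r * r)), ← hmom,
    ofReal_integral_eq_lintegral_ofReal hint (ae_of_all _ fun s => by
      have := hγd ‖s‖; simp only [hrel, Pi.zero_apply]; positivity)]

section EnergySpace

variable {Ω Ωδ : Set (EuclideanSpace ℝ (Fin d))} {γdiff : ℝ → ℝ}
  {u v : EuclideanSpace ℝ (Fin d) → ℝ}

theorem energyNorm_nonneg : 0 ≤ energyNorm Ωδ γdiff u :=
  Real.sqrt_nonneg _

theorem energyNorm_sq (hγd : ∀ r, 0 ≤ γdiff r) :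
    energyNorm Ωδ γdiff u ^ 2 = ∫ p in Ωδ ×ˢ Ωδ, γdiff (dist p.1 p.2) * (u p.2 - u p.1) ^ 2 :=
  Real.sq_sqrt (integral_nonneg fun _ => mul_nonneg (hγd _) (sq_nonneg _))

theorem ae_aemeasurable_energyIntegrand
    (hu : IntegrableOn (fun p : EuclideanSpace ℝ (Fin d) × EuclideanSpace ℝ (Fin d) =>
      γdiff (dist p.1 p.2) * (u p.2 - u p.1) ^ 2) (Ωδ ×ˢ Ωδ)) :
    ∀ᵐ x ∂volume.restrict Ωδ, AEMeasurable
      (fun y => ENNReal.ofReal (γdiff (dist x y) * (u y - u x) ^ 2)) (volume.restrict Ωδ) := by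
  have h := hu.aestronglyMeasurable
  rw [Measure.volume_eq_prod, ← Measure.prod_restrict] at h
  filter_upwards [h.prodMk_left] with x hx
  exact ENNReal.measurable_ofReal.comp_aemeasurable hx.aemeasurable

theorem lintegral_localEnergy (hγd : ∀ r, 0 ≤ γdiff r)
    (hu : IntegrableOn (fun p : EuclideanSpace ℝ (Fin d) × EuclideanSpace ℝ (Fin d) =>
      γdiff (dist p.1 p.2) * (u p.2 - u p.1) ^ 2) (Ωδ ×ˢ Ωδ)) :
    ∫⁻ x in Ωδ, localEnergy Ωδ γdiff u x = ENNReal.ofReal (energyNorm Ωδ γdiff u ^ 2) := by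
  have h : AEMeasurable (fun p : EuclideanSpace ℝ (Fin d) × EuclideanSpace ℝ (Fin d) =>
      ENNReal.ofReal (γdiff (dist p.1 p.2) * (u p.2 - u p.1) ^ 2))
      ((volume.restrict Ωδ).prod (volume.restrict Ωδ)) := by
    rw [Measure.prod_restrict, ← Measure.volume_eq_prod]
    exact ENNReal.measurable_ofReal.comp_aemeasurable hu.aemeasurable
  rw [energyNorm_sq hγd, ofReal_integral_eq_lintegral_ofReal hu
    (ae_of_all _ fun _ => mul_nonneg (hγd _) (sq_nonneg _)), Measure.volume_eq_prod,
    ← Measure.prod_restrict, lintegral_prod _ h]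
  rfl

theorem abs_dirichletForm_le (hγd : ∀ r, 0 ≤ γdiff r)
    (hu : IntegrableOn (fun p : EuclideanSpace ℝ (Fin d) × EuclideanSpace ℝ (Fin d) =>
      γdiff (dist p.1 p.2) * (u p.2 - u p.1) ^ 2) (Ωδ ×ˢ Ωδ))
    (hv : IntegrableOn (fun p : EuclideanSpace ℝ (Fin d) × EuclideanSpace ℝ (Fin d) =>
      γdiff (dist p.1 p.2) * (v p.2 - v p.1) ^ 2) (Ωδ ×ˢ Ωδ)) :
    |dirichletForm Ωδ γdiff u v| ≤ energyNorm Ωδ γdiff u * energyNorm Ωδ γdiff v := by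
  refine le_sqrt_mul_sqrt_of_forall_le (integral_nonneg fun _ => mul_nonneg (hγd _) (sq_nonneg _))
    (integral_nonneg fun _ => mul_nonneg (hγd _) (sq_nonneg _)) fun t ht => ?_
  calc |dirichletForm Ωδ γdiff u v|
      ≤ ∫ p in Ωδ ×ˢ Ωδ, (t * (γdiff (dist p.1 p.2) * (u p.2 - u p.1) ^ 2) +
          γdiff (dist p.1 p.2) * (v p.2 - v p.1) ^ 2 / t) / 2 := by
        rw [dirichletForm, ← Real.norm_eq_abs]
        refine norm_integral_le_of_norm_le (((hu.const_mul t).add (hv.div_const t)).div_const 2)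
          (ae_of_all _ fun p => ?_)
        have := two_mul_abs_mul_mul_le (a := u p.2 - u p.1) (b := v p.2 - v p.1) ht
          (hγd (dist p.1 p.2))
        rw [Real.norm_eq_abs]
        linarith
    _ = _ := by
        rw [integral_div, integral_add (hu.const_mul t) (hv.div_const t), integral_const_mul,
          integral_div]

variable {H : EuclideanSpace ℝ (Fin d) → Set (EuclideanSpace ℝ (Fin d))}
  {bvec : EuclideanSpace ℝ (Fin d) → EuclideanSpace ℝ (Fin d)} {γconv : ℝ → ℝ} {δ η Bb M : ℝ}

theorem two_mul_enorm_convPairing_le (hη : 0 < η) (hΩ : MeasurableSet Ω) (hsub : Ω ⊆ Ωδ)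
    (hball : ∀ x ∈ Ω, ball x δ ⊆ Ωδ) (hH : ∀ x, H x ⊆ ball x δ) (hb : ∀ x, ‖bvec x‖ ≤ Bb)
    (hγd : ∀ r, 0 ≤ γdiff r) (hrel : ∀ r, γconv r = r / η * γdiff r)
    (hM : ∀ x : EuclideanSpace ℝ (Fin d),
      ∫⁻ y in ball x δ, ENNReal.ofReal (γconv (dist y x) * dist y x) ≤ ENNReal.ofReal M)
    (hu : MemEnergy Ω Ωδ γdiff u) (hv : MemEnergy Ω Ωδ γdiff v) {t : ℝ} (ht : 0 < t) :
    2 * ‖convPairing Ω H bvec γconv u v‖ₑ ≤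
      ENNReal.ofReal Bb * (ENNReal.ofReal (t * ∫ x in Ω, v x ^ 2) * ENNReal.ofReal M +
        ENNReal.ofReal (energyNorm Ωδ γdiff u ^ 2) * ENNReal.ofReal (1 / (η * t))) := by
  have hpt : ∀ᵐ x ∂volume.restrict Ω,
      2 * ‖(∫ y in H x, ⟪bvec x, y - x⟫ / ‖y - x‖ * γconv (dist y x) * (u y - u x)) * v x‖ₑ ≤
        ENNReal.ofReal Bb * (ENNReal.ofReal (t * v x ^ 2) * ENNReal.ofReal M +
          localEnergy Ωδ γdiff u x * ENNReal.ofReal (1 / (η * t))) := by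
    filter_upwards [ae_restrict_mem hΩ,
      ae_restrict_of_ae_restrict_of_subset hsub (ae_aemeasurable_energyIntegrand hu.2.2.2)]
      with x hx hux
    exact two_mul_enorm_convIntegral_mul_le hη ht hγd hrel (hb x) (hH x)
      ((hH x).trans (hball x hx)) (hM x) hux (v x)
  calc 2 * ‖convPairing Ω H bvec γconv u v‖ₑ
      ≤ ∫⁻ x in Ω, 2 * ‖(∫ y in H x, ⟪bvec x, y - x⟫ / ‖y - x‖ * γconv (dist y x) *
          (u y - u x)) * v x‖ₑ := by
        rw [lintegral_const_mul' _ _ ENNReal.ofNat_ne_top]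
        gcongr
        exact enorm_integral_le_lintegral_enorm _
    _ ≤ ∫⁻ x in Ω, ENNReal.ofReal Bb * (ENNReal.ofReal (t * v x ^ 2) * ENNReal.ofReal M +
          localEnergy Ωδ γdiff u x * ENNReal.ofReal (1 / (η * t))) := lintegral_mono_ae hpt
    _ = ENNReal.ofReal Bb * ((∫⁻ x in Ω, ENNReal.ofReal (t * v x ^ 2)) * ENNReal.ofReal M +
          (∫⁻ x in Ω, localEnergy Ωδ γdiff u x) * ENNReal.ofReal (1 / (η * t))) := by
        rw [lintegral_const_mul' _ _ ENNReal.ofReal_ne_top,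
          lintegral_add_left (((hv.1.pow_const 2).const_mul t).ennreal_ofReal.mul_const _),
          lintegral_mul_const' _ _ ENNReal.ofReal_ne_top,
          lintegral_mul_const' _ _ ENNReal.ofReal_ne_top]
    _ ≤ _ := by
        rw [← integral_const_mul, ofReal_integral_eq_lintegral_ofReal
          ((hv.2.2.1.mono_set hsub).const_mul t) (ae_of_all _ fun x => by positivity),
          ← lintegral_localEnergy hγd hu.2.2.2]
        gcongr

theorem two_mul_abs_convPairing_le (hη : 0 < η) (hΩ : MeasurableSet Ω) (hsub : Ω ⊆ Ωδ)
    (hball : ∀ x ∈ Ω, ball x δ ⊆ Ωδ) (hH : ∀ x, H x ⊆ ball x δ) (hb : ∀ x, ‖bvec x‖ ≤ Bb)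
    (hγd : ∀ r, 0 ≤ γdiff r) (hrel : ∀ r, γconv r = r / η * γdiff r) (hM0 : 0 ≤ M)
    (hM : ∀ x : EuclideanSpace ℝ (Fin d),
      ∫⁻ y in ball x δ, ENNReal.ofReal (γconv (dist y x) * dist y x) ≤ ENNReal.ofReal M)
    (hu : MemEnergy Ω Ωδ γdiff u) (hv : MemEnergy Ω Ωδ γdiff v) {t : ℝ} (ht : 0 < t) :
    2 * |convPairing Ω H bvec γconv u v| ≤
      Bb * (t * M * ∫ x in Ω, v x ^ 2) + Bb * energyNorm Ωδ γdiff u ^ 2 / (η * t) := by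
  have hBb : 0 ≤ Bb := (norm_nonneg _).trans (hb 0)
  have h := two_mul_enorm_convPairing_le hη hΩ hsub hball hH hb hγd hrel hM hu hv ht
  rw [← ENNReal.ofReal_mul (by positivity), ← ENNReal.ofReal_mul (by positivity),
    ← ENNReal.ofReal_add (by positivity) (by positivity), ← ENNReal.ofReal_mul hBb] at h
  calc 2 * |convPairing Ω H bvec γconv u v|
      ≤ Bb * ((t * ∫ x in Ω, v x ^ 2) * M + energyNorm Ωδ γdiff u ^ 2 * (1 / (η * t))) := by
        rw [← ENNReal.ofReal_le_ofReal_iff (by positivity), ENNReal.ofReal_mul zero_le_two]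
        simpa [Real.enorm_eq_ofReal_abs] using h
    _ = _ := by ring

theorem abs_convPairing_le (hη : 0 < η) (hΩ : MeasurableSet Ω) (hsub : Ω ⊆ Ωδ)
    (hball : ∀ x ∈ Ω, ball x δ ⊆ Ωδ) (hH : ∀ x, H x ⊆ ball x δ) (hb : ∀ x, ‖bvec x‖ ≤ Bb)
    (hγd : ∀ r, 0 ≤ γdiff r) (hrel : ∀ r, γconv r = r / η * γdiff r) (hM0 : 0 ≤ M)
    (hM : ∀ x : EuclideanSpace ℝ (Fin d),
      ∫⁻ y in ball x δ, ENNReal.ofReal (γconv (dist y x) * dist y x) ≤ ENNReal.ofReal M)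
    (hu : MemEnergy Ω Ωδ γdiff u) (hv : MemEnergy Ω Ωδ γdiff v) :
    |convPairing Ω H bvec γconv u v| ≤
      √(M / η) * Bb * energyNorm Ωδ γdiff u * √(∫ x in Ω, v x ^ 2) := by
  have hBb : 0 ≤ Bb := (norm_nonneg _).trans (hb 0)
  have hN : 0 ≤ energyNorm Ωδ γdiff u := energyNorm_nonneg
  calc |convPairing Ω H bvec γconv u v|
      ≤ √(Bb * M * ∫ x in Ω, v x ^ 2) * √(Bb * energyNorm Ωδ γdiff u ^ 2 / η) := by
        refine le_sqrt_mul_sqrt_of_forall_le (by positivity) (by positivity) fun t ht => ?_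
        have h := two_mul_abs_convPairing_le hη hΩ hsub hball hH hb hγd hrel hM0 hM hu hv ht
        have h' : Bb * (t * M * ∫ x in Ω, v x ^ 2) + Bb * energyNorm Ωδ γdiff u ^ 2 / (η * t) =
            t * (Bb * M * ∫ x in Ω, v x ^ 2) + Bb * energyNorm Ωδ γdiff u ^ 2 / η / t := by
          field_simp
        linarith
    _ = √(M / η) * Bb * energyNorm Ωδ γdiff u * √(∫ x in Ω, v x ^ 2) := by
        rw [← Real.sqrt_mul (by positivity),
          show Bb * M * (∫ x in Ω, v x ^ 2) * (Bb * energyNorm Ωδ γdiff u ^ 2 / η) =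
            (Bb * energyNorm Ωδ γdiff u) ^ 2 * (M / η) * ∫ x in Ω, v x ^ 2 by ring,
          Real.sqrt_mul (by positivity), Real.sqrt_mul (by positivity),
          Real.sqrt_sq (by positivity)]
        ring

end EnergySpace

theorem stmt5_general {δ η ε : ℝ} (hη : 0 < η)
    (Ω Ωδ : Set (EuclideanSpace ℝ (Fin d)))
    (hΩmeas : MeasurableSet Ω)
    (hsub : Ω ⊆ Ωδ)
    (hball : ∀ x ∈ Ω, Metric.ball x δ ⊆ Ωδ)
    (H : EuclideanSpace ℝ (Fin d) → Set (EuclideanSpace ℝ (Fin d)))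
    (hH : ∀ x, H x ⊆ Metric.ball x δ)
    (bvec : EuclideanSpace ℝ (Fin d) → EuclideanSpace ℝ (Fin d))
    (Bb : ℝ) (hb : ∀ x, ‖bvec x‖ ≤ Bb)
    (γdiff γconv : ℝ → ℝ)
    (hγd0 : ∀ r, 0 ≤ γdiff r)
    (hrel : ∀ r, γconv r = (r / η) * γdiff r)
    (hmom : (∫ s in Metric.ball (0 : EuclideanSpace ℝ (Fin d)) δ, γconv ‖s‖ * ‖s‖) = d / η) :
    ∃ C > 0,
      (∀ u v : EuclideanSpace ℝ (Fin d) → ℝ,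
          MemEnergy Ω Ωδ γdiff u → MemEnergy Ω Ωδ γdiff v →
          |convPairing Ω H bvec γconv u v| ≤
            C * Bb * energyNorm Ωδ γdiff u * Real.sqrt (∫ x in Ω, v x ^ 2)) ∧
      (∀ v : EuclideanSpace ℝ (Fin d) → ℝ, MemEnergy Ω Ωδ γdiff v →
        BddAbove (Set.range
          fun u : {u : EuclideanSpace ℝ (Fin d) → ℝ // MemEnergy Ω Ωδ γdiff u} =>
            |ε * dirichletForm Ωδ γdiff u.1 v + convPairing Ω H bvec γconv u.1 v| /
              energyNorm Ωδ γdiff u.1)) := by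
  have hM := setLIntegral_ball_moment_eq hη hγd0 hrel hmom
  have hBb : 0 ≤ Bb := (norm_nonneg _).trans (hb 0)
  have hconv : ∀ u v, MemEnergy Ω Ωδ γdiff u → MemEnergy Ω Ωδ γdiff v →
      |convPairing Ω H bvec γconv u v| ≤
        (√(d / η / η) + 1) * Bb * energyNorm Ωδ γdiff u * √(∫ x in Ω, v x ^ 2) := by
    intro u v hu hv
    have hN : 0 ≤ energyNorm Ωδ γdiff u := energyNorm_nonneg
    refine (abs_convPairing_le hη hΩmeas hsub hball hH hb hγd0 hrel (by positivity)
      (fun x => (hM x).le) hu hv).trans ?_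
    gcongr
    linarith
  refine ⟨√(d / η / η) + 1, by positivity, hconv, fun v hv => ⟨|ε| * energyNorm Ωδ γdiff v +
    (√(d / η / η) + 1) * Bb * √(∫ x in Ω, v x ^ 2), ?_⟩⟩
  rintro _ ⟨u, rfl⟩
  have hNv : 0 ≤ energyNorm Ωδ γdiff v := energyNorm_nonneg
  refine div_le_of_le_mul₀ energyNorm_nonneg (by positivity) ?_
  calc |ε * dirichletForm Ωδ γdiff u.1 v + convPairing Ω H bvec γconv u.1 v|
      ≤ |ε| * |dirichletForm Ωδ γdiff u.1 v| + |convPairing Ω H bvec γconv u.1 v| := by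
        rw [← abs_mul]
        exact abs_add_le _ _
    _ ≤ |ε| * (energyNorm Ωδ γdiff u.1 * energyNorm Ωδ γdiff v) +
          (√(d / η / η) + 1) * Bb * energyNorm Ωδ γdiff u.1 * √(∫ x in Ω, v x ^ 2) := by
        gcongr
        exacts [abs_dirichletForm_le hγd0 u.2.2.2.2 hv.2.2.2, hconv _ _ u.2 hv]
    _ = _ := by ring

/-- with the kernel relation `γᶜᵒⁿᵛ = (|s|/η) γᵈⁱᶠᶠ` and a finite first
moment of the convection kernel, the convection pairing is bounded by
`C ‖b‖_∞ ‖u‖_{S_δ} ‖v‖_{L²}`; consequently the optimal test quantity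
`sup_{u ≠ 0} |b(u,v)|/‖u‖_{S_δ}` is finite for each `v ∈ S_δ(Ω)`, where
`b(u,v) = ε a(u,v) + (b·G_δ u, v)`. -/
theorem stmt5 {δ η ε : ℝ} (hδ : 0 < δ) (hη : 0 < η) (hε : 0 < ε)
    (Ω Ωδ : Set (EuclideanSpace ℝ (Fin d)))
    (hΩmeas : MeasurableSet Ω) (hΩδmeas : MeasurableSet Ωδ)
    (hΩopen : IsOpen Ω) (hΩbdd : Bornology.IsBounded Ω) (hsub : Ω ⊆ Ωδ)
    (hball : ∀ x ∈ Ω, Metric.ball x δ ⊆ Ωδ)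
    (H : EuclideanSpace ℝ (Fin d) → Set (EuclideanSpace ℝ (Fin d)))
    (hH : ∀ x, H x ⊆ Metric.ball x δ) (hHmeas : ∀ x, MeasurableSet (H x))
    (bvec : EuclideanSpace ℝ (Fin d) → EuclideanSpace ℝ (Fin d))
    (Bb : ℝ) (hb : ∀ x, ‖bvec x‖ ≤ Bb) (hBb : 0 ≤ Bb)
    (γdiff γconv : ℝ → ℝ)
    (hγd0 : ∀ r, 0 ≤ γdiff r) (hγdsupp : ∀ r, δ < r → γdiff r = 0)
    (hγc0 : ∀ r, 0 ≤ γconv r)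
    (hrel : ∀ r, γconv r = (r / η) * γdiff r)
    (hmom : (∫ s in Metric.ball (0 : EuclideanSpace ℝ (Fin d)) δ, γconv ‖s‖ * ‖s‖) = d / η) :
    ∃ C > 0,
      (∀ u v : EuclideanSpace ℝ (Fin d) → ℝ,
          MemEnergy Ω Ωδ γdiff u → MemEnergy Ω Ωδ γdiff v →
          |convPairing Ω H bvec γconv u v| ≤
            C * Bb * energyNorm Ωδ γdiff u * Real.sqrt (∫ x in Ω, v x ^ 2)) ∧
      (∀ v : EuclideanSpace ℝ (Fin d) → ℝ, MemEnergy Ω Ωδ γdiff v →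
        BddAbove (Set.range
          fun u : {u : EuclideanSpace ℝ (Fin d) → ℝ // MemEnergy Ω Ωδ γdiff u} =>
            |ε * dirichletForm Ωδ γdiff u.1 v + convPairing Ω H bvec γconv u.1 v| /
              energyNorm Ωδ γdiff u.1)) :=
  stmt5_general hη Ω Ωδ hΩmeas hsub hball H hH bvec Bb hb γdiff γconv hγd0 hrel hmom
end

section
/- If b(x) is a constant vector field and H_δ(x) = {y ∈ B_δ(x) : −b·(y−x) > 0} is the upwind hemisphere, then for all x, y with |y−x| < δ and −b·(y−x) ≠ 0, the indicators satisfy 1_{H_δ(y)}(x) = 1 − 1_{H_δ(x)}(y), and consequently the nonlocal divergence of b vanishes: D_δ(b)(x) = ∫ (b 1_{H_δ(x)}(y) + b 1_{H_δ(y)}(x)) · [(y−x)/|y−x|] γ^conv_δ(|y−x|) dy = 0 for all x (in the principal-value sense). -/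
/-!
Writing `y = x + s`, the indicator factor `1_{H_δ(x)}(y) + 1_{H_δ(y)}(x)` and the radial
factor `γ(|s|)` are even in `s`, because the hemispheres are translates of one another, while
the flux `b·s/|s|` is odd. Hence the integrand is odd about `x`, and the reflection `s ↦ -s`,
which preserves Lebesgue measure, shows that its integral equals its own negative.
-/

open MeasureTheory
open scoped RealInnerProductSpace

theorem integral_eq_zero_of_odd_about {E F : Type*} [AddGroup E] [MeasurableSpace E]
    [MeasurableAdd E] [MeasurableNeg E] [NormedAddCommGroup F] [NormedSpace ℝ F]
    (μ : Measure E) [μ.IsAddLeftInvariant] [μ.IsNegInvariant] {f : E → F} (x : E)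
    (hf : ∀ s, f (x - s) = -f (x + s)) :
    ∫ y, f y ∂μ = 0 := by
  have hsymm : ∫ y, f y ∂μ = -∫ y, f y ∂μ := calc
    ∫ y, f y ∂μ = ∫ s, f (x - s) ∂μ := (integral_sub_left_eq_self f μ x).symm
    _ = -∫ s, f (x + s) ∂μ := by simp only [hf, integral_neg]
    _ = -∫ y, f y ∂μ := by rw [integral_add_left_eq_self]
  have htwice : (2 : ℝ) • ∫ y, f y ∂μ = 0 := by
    rw [two_smul]
    nth_rw 2 [hsymm]
    exact add_neg_cancel _
  simpa using htwice

section UpwindHemisphere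

variable {E : Type*} [NormedAddCommGroup E] [InnerProductSpace ℝ E] (b : E) (δ : ℝ)

noncomputable def upwindHemisphere (x : E) : Set E :=
  {y ∈ Metric.ball x δ | ⟪b, y - x⟫ < 0}

theorem indicator_upwindHemisphere_swap {x y : E} (hxy : dist x y < δ) (hb : ⟪b, y - x⟫ ≠ 0) :
    (upwindHemisphere b δ y).indicator (fun _ => (1 : ℝ)) x =
      1 - (upwindHemisphere b δ x).indicator (fun _ => (1 : ℝ)) y := by
  have hyx : dist y x < δ := by rwa [dist_comm]
  have hflip : ⟪b, x - y⟫ = -⟪b, y - x⟫ := by rw [← inner_neg_right, neg_sub]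
  rcases hb.lt_or_gt with hneg | hpos
  · have hx : x ∉ upwindHemisphere b δ y := fun h => by linarith [h.2]
    have hy : y ∈ upwindHemisphere b δ x := ⟨hyx, hneg⟩
    simp [hx, hy]
  · have hx : x ∈ upwindHemisphere b δ y := ⟨hxy, by linarith⟩
    have hy : y ∉ upwindHemisphere b δ x := fun h => by linarith [h.2]
    simp [hx, hy]

theorem indicator_upwindHemisphere_add_right (x y t : E) :
    (upwindHemisphere b δ (x + t)).indicator (fun _ => (1 : ℝ)) (y + t) =
      (upwindHemisphere b δ x).indicator (fun _ => (1 : ℝ)) y := by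
  simp only [upwindHemisphere, Set.indicator_apply, Set.mem_ofPred_eq, Metric.mem_ball,
    dist_add_right, add_sub_add_right_eq_sub]

noncomputable def upwindDivergenceIntegrand (γ : ℝ → ℝ) (x y : E) : ℝ :=
  ((upwindHemisphere b δ x).indicator (fun _ => (1 : ℝ)) y +
      (upwindHemisphere b δ y).indicator (fun _ => (1 : ℝ)) x) *
    (⟪b, y - x⟫ / ‖y - x‖) * γ (dist y x)

theorem upwindDivergenceIntegrand_sub (γ : ℝ → ℝ) (x s : E) :
    upwindDivergenceIntegrand b δ γ x (x - s) = -upwindDivergenceIntegrand b δ γ x (x + s) := by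
  have hind_left := indicator_upwindHemisphere_add_right b δ x (x - s) s
  have hind_right := indicator_upwindHemisphere_add_right b δ (x - s) x s
  rw [sub_add_cancel] at hind_left hind_right
  simp only [upwindDivergenceIntegrand, ← hind_left, ← hind_right, dist_eq_norm,
    sub_sub_cancel_left, add_sub_cancel_left, norm_neg, inner_neg_right]
  ring

end UpwindHemisphere

theorem stmt8_general {d : ℕ} {δ : ℝ}
    (bconst : EuclideanSpace ℝ (Fin d))
    (γ : ℝ → ℝ)
    (H : EuclideanSpace ℝ (Fin d) → Set (EuclideanSpace ℝ (Fin d)))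
    (hHdef : ∀ x, H x = {y ∈ Metric.ball x δ | ⟪bconst, y - x⟫ < 0}) :
    (∀ x y : EuclideanSpace ℝ (Fin d), dist x y < δ → ⟪bconst, y - x⟫ ≠ 0 →
      ((H y).indicator (fun _ => (1 : ℝ)) x = 1 - (H x).indicator (fun _ => (1 : ℝ)) y)) ∧
    (∀ x : EuclideanSpace ℝ (Fin d),
      (∫ y, ((H x).indicator (fun _ => (1 : ℝ)) y + (H y).indicator (fun _ => (1 : ℝ)) x) *
        (⟪bconst, y - x⟫ / ‖y - x‖) * γ (dist y x)) = 0) := by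
  obtain rfl : H = upwindHemisphere bconst δ := funext hHdef
  exact ⟨fun x y => indicator_upwindHemisphere_swap bconst δ,
    fun x => integral_eq_zero_of_odd_about volume x (upwindDivergenceIntegrand_sub bconst δ γ x)⟩

/-- for a constant velocity `b` and the upwind hemisphere
`H_δ(x) = {y ∈ B_δ(x) : -b·(y-x) > 0}`, the indicators satisfy
`1_{H_δ(y)}(x) = 1 - 1_{H_δ(x)}(y)` whenever `|y-x| < δ` and `b·(y-x) ≠ 0`, and the
nonlocal divergence of `b` vanishes. -/
theorem stmt8 {d : ℕ} {δ : ℝ} (hδ : 0 < δ)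
    (bconst : EuclideanSpace ℝ (Fin d)) (hb : bconst ≠ 0)
    (γ : ℝ → ℝ) (hγ0 : ∀ r, 0 ≤ γ r) (hγsupp : ∀ r, δ < r → γ r = 0)
    (hmom : Integrable (fun s : EuclideanSpace ℝ (Fin d) => γ ‖s‖ * ‖s‖))
    (H : EuclideanSpace ℝ (Fin d) → Set (EuclideanSpace ℝ (Fin d)))
    (hHdef : ∀ x, H x = {y ∈ Metric.ball x δ | ⟪bconst, y - x⟫ < 0}) :
    (∀ x y : EuclideanSpace ℝ (Fin d), dist x y < δ → ⟪bconst, y - x⟫ ≠ 0 →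
      ((H y).indicator (fun _ => (1 : ℝ)) x = 1 - (H x).indicator (fun _ => (1 : ℝ)) y)) ∧
    (∀ x : EuclideanSpace ℝ (Fin d),
      (∫ y, ((H x).indicator (fun _ => (1 : ℝ)) y + (H y).indicator (fun _ => (1 : ℝ)) x) *
        (⟪bconst, y - x⟫ / ‖y - x‖) * γ (dist y x)) = 0) :=
  stmt8_general bconst γ H hHdef
end
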